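/- arXiv:2502.02082 — 2 statements merged into one kernel-verified Lean document; each statement's English description precedes it below -/
import Mathlib

section
/- Let q be a quadratic form of rank 1 on a 3-dimensional vector space over an algebraically closed field of characteristic ≠ 2 (say q = a₁x₁² with a₁ ≠ 0). Then the even Clifford algebra Cl₀(q) is isomorphic to the exterior algebra on 2 generators, i.e., to k⟨u,v⟩/(u², v², uv+vu). -/
/-!
Choose `c` with `c² = -a`. The coordinate change `x ↦ ((x₁, …, xₙ), c x₀)` is an isometry from
`a x₀²` to the form `(m, r) ↦ -r²` on `kⁿ × k`. For any form `Q₀`, the even Clifford algebra of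
`(m, r) ↦ Q₀ m - r²` is `Cl(Q₀)` (`CliffordAlgebra.equivEven`), and `Cl(0)` is by definition the
exterior algebra.
-/

namespace CliffordAlgebra

variable {R M₁ M₂ : Type*} [CommRing R] [AddCommGroup M₁] [AddCommGroup M₂]
  [Module R M₁] [Module R M₂] {Q₁ : QuadraticForm R M₁} {Q₂ : QuadraticForm R M₂}

theorem evenOdd_map_isometryEquiv (e : Q₁.IsometryEquiv Q₂) (n : ZMod 2) :
    (evenOdd Q₁ n).map (map e.toIsometry).toLinearMap = evenOdd Q₂ n := by
  have hrange : LinearMap.range e.toIsometry.toLinearMap = ⊤ :=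
    LinearMap.range_eq_top.mpr e.toLinearEquiv.surjective
  simp_rw [evenOdd, Submodule.map_iSup, Submodule.map_pow, ι_range_map_map, hrange,
    Submodule.map_top]

noncomputable def evenEquivOfIsometry (e : Q₁.IsometryEquiv Q₂) : even Q₁ ≃ₐ[R] even Q₂ :=
  ((equivOfIsometry e).subalgebraMap (even Q₁)).trans <|
    Subalgebra.equivOfEq _ _ <| Subalgebra.toSubmodule_injective <| by
      change (evenOdd Q₁ 0).map (map e.toIsometry).toLinearMap = _
      rw [evenOdd_map_isometryEquiv, even_toSubmodule]

end CliffordAlgebra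

open CliffordAlgebra

noncomputable def isometryEquivQ'ZeroOfEqNegSq {k : Type*} [Field k] {n : ℕ}
    {Q : QuadraticForm k (Fin (n + 1) → k)} {c : k} (hc : c ≠ 0)
    (hQ : ∀ x, Q x = -(c * x 0) ^ 2) :
    Q.IsometryEquiv (EquivEven.Q' (0 : QuadraticForm k (Fin n → k))) where
  __ := ((Fin.consLinearEquiv k fun _ => k).symm.trans (LinearEquiv.prodComm k k _)).trans
    ((LinearEquiv.refl k _).prodCongr (LinearEquiv.smulOfNeZero k k c hc))
  map_app' x := by simp [hQ, sq]

theorem stmt_3_general (k : Type*) [Field k] [IsAlgClosed k]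
    (a : k) (ha : a ≠ 0)
    (Q : QuadraticForm k (Fin 3 → k))
    (hQ : ∀ x : Fin 3 → k, Q x = a * (x 0) ^ 2) :
    Nonempty ((CliffordAlgebra.even Q) ≃ₐ[k] ExteriorAlgebra k (Fin 2 → k)) := by
  obtain ⟨c, hc⟩ := IsAlgClosed.exists_pow_nat_eq (-a) two_pos
  have hc0 : c ≠ 0 := by
    rintro rfl
    exact ha (by simpa using hc.symm)
  have hQc : ∀ x, Q x = -(c * x 0) ^ 2 := fun x => by rw [hQ, mul_pow, hc, neg_mul, neg_neg]
  exact ⟨(evenEquivOfIsometry (isometryEquivQ'ZeroOfEqNegSq hc0 hQc)).trans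
    (equivEven 0).symm⟩

theorem stmt_3 (k : Type*) [Field k] [IsAlgClosed k] (hchar : (2 : k) ≠ 0)
    (a : k) (ha : a ≠ 0)
    (Q : QuadraticForm k (Fin 3 → k))
    (hQ : ∀ x : Fin 3 → k, Q x = a * (x 0) ^ 2) :
    Nonempty ((CliffordAlgebra.even Q) ≃ₐ[k] ExteriorAlgebra k (Fin 2 → k)) :=
  stmt_3_general k a ha Q hQ
end

section
/- Let q be a quadratic form of rank 2 on a 3-dimensional vector space over an algebraically closed field of characteristic ≠ 2. Then the even Clifford algebra Cl₀(q) is isomorphic to the path algebra of the quiver with two vertices and arrows α: 1→2, β: 2→1 modulo the relations αβ = βα = 0. -/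
/-!
STATEMENT 4: Let `q` be a quadratic form of rank 2 on a 3-dimensional vector space over an
algebraically closed field of characteristic ≠ 2.  Then the even Clifford algebra `Cl₀(q)`
is isomorphic to the path algebra of the quiver with two vertices and arrows
`α : 1 → 2`, `β : 2 → 1` modulo the relations `αβ = βα = 0`.

The path algebra with relations is presented below as the quotient of the free algebra on
generators `ε₁, ε₂, α, β` (the two vertex idempotents and the two arrows) by the path
algebra relations together with `αβ = βα = 0`.
-/

open FreeAlgebra

/-- The defining relations of the path algebra of the quiver
`• ⇄ •` (arrows `α : 1 → 2`, `β : 2 → 1`) modulo `αβ = βα = 0`.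
Generators: `0 ↦ ε₁`, `1 ↦ ε₂`, `2 ↦ α`, `3 ↦ β`. -/
inductive PathRel (k : Type*) [Field k] :
    FreeAlgebra k (Fin 4) → FreeAlgebra k (Fin 4) → Prop
  | idem1 : PathRel k (ι k 0 * ι k 0) (ι k 0)
  | idem2 : PathRel k (ι k 1 * ι k 1) (ι k 1)
  | orth12 : PathRel k (ι k 0 * ι k 1) 0
  | orth21 : PathRel k (ι k 1 * ι k 0) 0
  | unit : PathRel k (ι k 0 + ι k 1) 1
  | srcα : PathRel k (ι k 2 * ι k 0) (ι k 2)
  | tgtα : PathRel k (ι k 1 * ι k 2) (ι k 2)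
  | srcβ : PathRel k (ι k 3 * ι k 1) (ι k 3)
  | tgtβ : PathRel k (ι k 0 * ι k 3) (ι k 3)
  | relαβ : PathRel k (ι k 2 * ι k 3) 0
  | relβα : PathRel k (ι k 3 * ι k 2) 0

/-!
Let `v₀, v₁, v₂` be the orthogonal basis with `q(v₀) = a₀`, `q(v₁) = a₁`, `q(v₂) = 0`, and put
`u = v₀v₁`, `x = v₀v₂`, `y = v₁v₂`, so that `Cl₀(q)` has basis `1, u, x, y`. As `v₂` is isotropic
and orthogonal to `v₀, v₁`, the elements `x, y` span a square-zero ideal, while `u² = -a₀a₁ = c²`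
for some `c ∈ k`. Hence `s = u / c` is an involution anticommuting with `x` and `y`, so
`e₁ = (1 + s)/2` and `e₂ = (1 - s)/2` are complementary orthogonal idempotents and `α = e₂x`,
`β = e₁y` are arrows between them with `αβ = βα = 0`. Conversely `u = c(e₁ - e₂)`,
`x = α - (a₀/c)β`, `y = β - (a₁/c)α` satisfy the multiplication table of `Cl₀(q)`, which by the
universal property of the even Clifford algebra defines the inverse map.
-/

section

variable {k A : Type*} [Field k] [Ring A] [Algebra k A]

structure PathRelations (e₁ e₂ α β : A) : Prop where
  e₁_mul_e₁ : e₁ * e₁ = e₁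
  e₂_mul_e₂ : e₂ * e₂ = e₂
  e₁_mul_e₂ : e₁ * e₂ = 0
  e₂_mul_e₁ : e₂ * e₁ = 0
  e₁_add_e₂ : e₁ + e₂ = 1
  α_mul_e₁ : α * e₁ = α
  e₂_mul_α : e₂ * α = α
  β_mul_e₂ : β * e₂ = β
  e₁_mul_β : e₁ * β = β
  α_mul_β : α * β = 0
  β_mul_α : β * α = 0

namespace PathRelations

variable {e₁ e₂ α β : A} (h : PathRelations e₁ e₂ α β)
include h

theorem e₁_mul_α : e₁ * α = 0 := by
  rw [← h.e₂_mul_α, ← mul_assoc, h.e₁_mul_e₂, zero_mul]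

theorem e₂_mul_β : e₂ * β = 0 := by
  rw [← h.e₁_mul_β, ← mul_assoc, h.e₂_mul_e₁, zero_mul]

theorem α_mul_e₂ : α * e₂ = 0 := by
  rw [← h.α_mul_e₁, mul_assoc, h.e₁_mul_e₂, mul_zero]

theorem β_mul_e₁ : β * e₁ = 0 := by
  rw [← h.β_mul_e₂, mul_assoc, h.e₂_mul_e₁, mul_zero]

theorem α_mul_α : α * α = 0 := by
  nth_rw 1 [← h.α_mul_e₁]
  rw [mul_assoc, h.e₁_mul_α, mul_zero]

theorem β_mul_β : β * β = 0 := by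
  nth_rw 1 [← h.β_mul_e₂]
  rw [mul_assoc, h.e₂_mul_β, mul_zero]

theorem e₂_mul_sub (r : k) : e₂ * (α - r • β) = α := by
  rw [mul_sub, mul_smul_comm, h.e₂_mul_α, h.e₂_mul_β, smul_zero, sub_zero]

theorem e₁_mul_sub (r : k) : e₁ * (β - r • α) = β := by
  rw [mul_sub, mul_smul_comm, h.e₁_mul_β, h.e₁_mul_α, smul_zero, sub_zero]

theorem lift_rel ⦃x y : FreeAlgebra k (Fin 4)⦄ (hxy : PathRel k x y) :
    FreeAlgebra.lift k ![e₁, e₂, α, β] x = FreeAlgebra.lift k ![e₁, e₂, α, β] y := by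
  cases hxy <;> simp [h.e₁_mul_e₁, h.e₂_mul_e₂, h.e₁_mul_e₂, h.e₂_mul_e₁, h.e₁_add_e₂,
    h.α_mul_e₁, h.e₂_mul_α, h.β_mul_e₂, h.e₁_mul_β, h.α_mul_β, h.β_mul_α]

end PathRelations

variable (k) in
noncomputable abbrev pathGen (i : Fin 4) : RingQuot (PathRel k) :=
  RingQuot.mkAlgHom k (PathRel k) (FreeAlgebra.ι k i)

theorem pathRelations_pathGen :
    PathRelations (pathGen k 0) (pathGen k 1) (pathGen k 2) (pathGen k 3) := by
  constructor <;>
    simp only [pathGen, ← map_mul, ← map_add, ← map_one (RingQuot.mkAlgHom k (PathRel k)),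
      ← map_zero (RingQuot.mkAlgHom k (PathRel k))] <;>
    exact RingQuot.mkAlgHom_rel k (by constructor)

noncomputable def pathLift {e₁ e₂ α β : A} (h : PathRelations e₁ e₂ α β) :
    RingQuot (PathRel k) →ₐ[k] A :=
  RingQuot.liftAlgHom k ⟨FreeAlgebra.lift k ![e₁, e₂, α, β], h.lift_rel⟩

section pathLift

variable {e₁ e₂ α β : A} (h : PathRelations e₁ e₂ α β)

@[simp] theorem pathLift_pathGen_zero : pathLift h (pathGen k 0) = e₁ := by simp [pathLift]

@[simp] theorem pathLift_pathGen_one : pathLift h (pathGen k 1) = e₂ := by simp [pathLift]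

@[simp] theorem pathLift_pathGen_two : pathLift h (pathGen k 2) = α := by simp [pathLift]

@[simp] theorem pathLift_pathGen_three : pathLift h (pathGen k 3) = β := by simp [pathLift]

end pathLift

theorem pathAlgHom_ext {f g : RingQuot (PathRel k) →ₐ[k] A}
    (h : ∀ i, f (pathGen k i) = g (pathGen k i)) : f = g :=
  RingQuot.ringQuot_ext' k _ _ (FreeAlgebra.hom_ext (funext h))

section Involution

variable (k) in
noncomputable def idem₁ (s : A) : A := (2 : k)⁻¹ • (1 + s)

variable (k) in
noncomputable def idem₂ (s : A) : A := (2 : k)⁻¹ • (1 - s)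

theorem AlgHom.map_idem₁ {B : Type*} [Ring B] [Algebra k B] (f : A →ₐ[k] B) (s : A) :
    f (idem₁ k s) = idem₁ k (f s) := by
  simp [idem₁]

theorem AlgHom.map_idem₂ {B : Type*} [Ring B] [Algebra k B] (f : A →ₐ[k] B) (s : A) :
    f (idem₂ k s) = idem₂ k (f s) := by
  simp [idem₂]

variable {s : A} (h2 : (2 : k) ≠ 0)
include h2

theorem idem₁_add_idem₂ : idem₁ k s + idem₂ k s = 1 := by
  rw [idem₁, idem₂, ← smul_add, add_add_sub_cancel, ← two_smul k, smul_smul, inv_mul_cancel₀ h2,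
    one_smul]

theorem idem₁_sub_idem₂ : idem₁ k s - idem₂ k s = s := by
  rw [idem₁, idem₂, ← smul_sub, add_sub_sub_cancel, ← two_smul k s, smul_smul,
    inv_mul_cancel₀ h2, one_smul]

theorem idem₁_sub_of_add_eq_one {e₁ e₂ : A} (h : e₁ + e₂ = 1) : idem₁ k (e₁ - e₂) = e₁ := by
  rw [idem₁, ← h, add_add_sub_cancel, ← two_smul k e₁, smul_smul, inv_mul_cancel₀ h2, one_smul]

theorem idem₂_sub_of_add_eq_one {e₁ e₂ : A} (h : e₁ + e₂ = 1) : idem₂ k (e₁ - e₂) = e₂ := by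
  rw [idem₂, ← h, add_sub_sub_cancel, ← two_smul k e₂, smul_smul, inv_mul_cancel₀ h2, one_smul]

theorem pathRelations_of_mul_self_eq_one {x y : A} (hs : s * s = 1) (hxs : x * s = -(s * x))
    (hys : y * s = -(s * y)) (hxy : x * y = 0) (hyx : y * x = 0) :
    PathRelations (idem₁ k s) (idem₂ k s) (idem₂ k s * x) (idem₁ k s * y) := by
  have e₁_mul_e₁ : idem₁ k s * idem₁ k s = idem₁ k s := by
    simp only [idem₁, smul_mul_smul, add_mul, mul_add, one_mul, mul_one, hs]
    match_scalars <;> field_simp <;> ring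
  have e₂_mul_e₂ : idem₂ k s * idem₂ k s = idem₂ k s := by
    simp only [idem₂, smul_mul_smul, sub_mul, mul_sub, one_mul, mul_one, hs]
    match_scalars <;> field_simp <;> ring
  have hx : x * idem₁ k s = idem₂ k s * x := by
    rw [idem₁, idem₂, mul_smul_comm, smul_mul_assoc, mul_add, sub_mul, mul_one, one_mul, hxs,
      sub_eq_add_neg]
  have hy : y * idem₂ k s = idem₁ k s * y := by
    rw [idem₁, idem₂, mul_smul_comm, smul_mul_assoc, mul_sub, add_mul, mul_one, one_mul, hys,
      sub_neg_eq_add]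
  refine ⟨e₁_mul_e₁, e₂_mul_e₂, ?_, ?_, ?_, ?_, ?_, ?_, ?_, ?_, ?_⟩
  · simp only [idem₁, idem₂, smul_mul_smul, add_mul, mul_sub, one_mul, mul_one, hs]
    simp [add_comm]
  · simp only [idem₁, idem₂, smul_mul_smul, sub_mul, mul_add, one_mul, mul_one, hs]
    simp [add_comm]
  · exact idem₁_add_idem₂ h2
  · rw [mul_assoc, hx, ← mul_assoc, e₂_mul_e₂]
  · rw [← mul_assoc, e₂_mul_e₂]
  · rw [mul_assoc, hy, ← mul_assoc, e₁_mul_e₁]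
  · rw [← mul_assoc, e₁_mul_e₁]
  · rw [mul_assoc, ← mul_assoc x, hx, mul_assoc, ← mul_assoc (idem₂ k s), e₂_mul_e₂, hxy,
      mul_zero]
  · rw [mul_assoc, ← mul_assoc y, hy, mul_assoc, ← mul_assoc (idem₁ k s), e₁_mul_e₁, hyx,
      mul_zero]

end Involution

/-- The multiplication table of `Cl₀(q)` in the basis `1, u = v₀v₁, x = v₀v₂, y = v₁v₂`. -/
structure EvenCliffordTable (a : Fin 2 → k) (u x y : A) : Prop where
  u_mul_u : u * u = (-(a 0 * a 1)) • 1
  u_mul_x : u * x = (-a 0) • y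
  x_mul_u : x * u = a 0 • y
  u_mul_y : u * y = a 1 • x
  y_mul_u : y * u = (-a 1) • x
  x_mul_x : x * x = 0
  y_mul_y : y * y = 0
  x_mul_y : x * y = 0
  y_mul_x : y * x = 0

section ChangeOfGenerators

variable {a : Fin 2 → k} {c : k} (hc : c ^ 2 = -(a 0 * a 1)) (hc0 : c ≠ 0)
include hc hc0

theorem PathRelations.evenCliffordTable {e₁ e₂ α β : A} (h : PathRelations e₁ e₂ α β) :
    EvenCliffordTable a (c • (e₁ - e₂)) (α - (a 0 / c) • β) (β - (a 1 / c) • α) := by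
  constructor <;>
    simp only [smul_mul_assoc, mul_smul_comm, sub_mul, mul_sub, smul_sub,
      h.e₁_mul_e₁, h.e₂_mul_e₂, h.e₁_mul_e₂, h.e₂_mul_e₁, h.e₁_mul_α, h.e₂_mul_α, h.e₁_mul_β,
      h.e₂_mul_β, h.α_mul_e₁, h.α_mul_e₂, h.β_mul_e₁, h.β_mul_e₂, h.α_mul_α, h.β_mul_β,
      h.α_mul_β, h.β_mul_α, ← h.e₁_add_e₂] <;>
    match_scalars <;> field_simp <;> grind

variable (h2 : (2 : k) ≠ 0) {u x y : A} (ht : EvenCliffordTable a u x y)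
include h2 ht

theorem EvenCliffordTable.pathRelations :
    PathRelations (idem₁ k (c⁻¹ • u)) (idem₂ k (c⁻¹ • u)) (idem₂ k (c⁻¹ • u) * x)
      (idem₁ k (c⁻¹ • u) * y) := by
  refine pathRelations_of_mul_self_eq_one h2 ?_ ?_ ?_ ht.x_mul_y ht.y_mul_x
  · rw [smul_mul_smul, ht.u_mul_u, smul_smul, ← hc, ← sq, ← mul_pow, inv_mul_cancel₀ hc0, one_pow,
      one_smul]
  · rw [mul_smul_comm, smul_mul_assoc, ht.x_mul_u, ht.u_mul_x]
    module
  · rw [mul_smul_comm, smul_mul_assoc, ht.y_mul_u, ht.u_mul_y]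
    module

theorem EvenCliffordTable.idem₂_mul_sub :
    idem₂ k (c⁻¹ • u) * x - (a 0 / c) • (idem₁ k (c⁻¹ • u) * y) = x := by
  simp only [idem₁, idem₂, smul_mul_assoc, add_mul, sub_mul, one_mul, ht.u_mul_x, ht.u_mul_y]
  match_scalars <;> field_simp <;> grind

theorem EvenCliffordTable.idem₁_mul_sub :
    idem₁ k (c⁻¹ • u) * y - (a 1 / c) • (idem₂ k (c⁻¹ • u) * x) = y := by
  simp only [idem₁, idem₂, smul_mul_assoc, add_mul, sub_mul, one_mul, ht.u_mul_x, ht.u_mul_y]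
  match_scalars <;> field_simp <;> grind

end ChangeOfGenerators

noncomputable def tableBilin (a : Fin 2 → k) (u x y : A) :
    (Fin 3 → k) →ₗ[k] (Fin 3 → k) →ₗ[k] A :=
  LinearMap.mk₂ k
    (fun v w ↦ (a 0 * v 0 * w 0 + a 1 * v 1 * w 1) • 1 + (v 0 * w 1 - v 1 * w 0) • u
      + (v 0 * w 2 - v 2 * w 0) • x + (v 1 * w 2 - v 2 * w 1) • y)
    (fun _ _ _ ↦ by simp only [Pi.add_apply]; module)
    (fun _ _ _ ↦ by simp only [Pi.smul_apply, smul_eq_mul]; module)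
    (fun _ _ _ ↦ by simp only [Pi.add_apply]; module)
    (fun _ _ _ ↦ by simp only [Pi.smul_apply, smul_eq_mul]; module)

@[simp]
theorem tableBilin_apply (a : Fin 2 → k) (u x y : A) (v w : Fin 3 → k) :
    tableBilin a u x y v w = (a 0 * v 0 * w 0 + a 1 * v 1 * w 1) • 1 + (v 0 * w 1 - v 1 * w 0) • u
      + (v 0 * w 2 - v 2 * w 0) • x + (v 1 * w 2 - v 2 * w 1) • y :=
  rfl

theorem AlgHom.map_tableBilin {B : Type*} [Ring B] [Algebra k B] (f : A →ₐ[k] B)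
    (a : Fin 2 → k) (u x y : A) (v w : Fin 3 → k) :
    f (tableBilin a u x y v w) = tableBilin a (f u) (f x) (f y) v w := by
  simp

namespace EvenCliffordTable

variable {a : Fin 2 → k} {u x y : A} (ht : EvenCliffordTable a u x y)
include ht

theorem mul_eq (s₀ s₁ s₂ s₃ t₀ t₁ t₂ t₃ : k) :
    (s₀ • 1 + s₁ • u + s₂ • x + s₃ • y) * (t₀ • 1 + t₁ • u + t₂ • x + t₃ • y) =
      (s₀ * t₀ - a 0 * a 1 * (s₁ * t₁)) • 1 + (s₀ * t₁ + s₁ * t₀) • u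
        + (s₀ * t₂ + s₂ * t₀ + a 1 * (s₁ * t₃ - s₃ * t₁)) • x
        + (s₀ * t₃ + s₃ * t₀ - a 0 * (s₁ * t₂ - s₂ * t₁)) • y := by
  simp only [mul_add, add_mul, smul_mul_smul, one_mul, mul_one, ht.u_mul_u, ht.u_mul_x,
    ht.x_mul_u, ht.u_mul_y, ht.y_mul_u, ht.x_mul_x, ht.y_mul_y, ht.x_mul_y, ht.y_mul_x, smul_zero]
  module

noncomputable def toEvenHom {Q : QuadraticForm k (Fin 3 → k)}
    (hQ : ∀ v, Q v = a 0 * v 0 ^ 2 + a 1 * v 1 ^ 2) : CliffordAlgebra.EvenHom Q A where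
  bilin := tableBilin a u x y
  contract v := by
    rw [tableBilin_apply, hQ, Algebra.algebraMap_eq_smul_one]
    match_scalars <;> ring
  contract_mid v₁ v₂ v₃ := by
    simp only [tableBilin_apply, ht.mul_eq, hQ]
    match_scalars <;> ring

end EvenCliffordTable

section EvenClifford

open CliffordAlgebra

variable (Q : QuadraticForm k (Fin 3 → k))

noncomputable abbrev evenGen (i j : Fin 3) : even Q :=
  (even.ι Q).bilin (Pi.single i 1) (Pi.single j 1)

theorem evenGen_mul_evenGen (i j l : Fin 3) :
    evenGen Q i j * evenGen Q j l = Q (Pi.single j 1) • evenGen Q i l :=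
  (even.ι Q).contract_mid _ _ _

theorem evenGen_self (i : Fin 3) : evenGen Q i i = Q (Pi.single i 1) • 1 := by
  rw [evenGen, (even.ι Q).contract, Algebra.algebraMap_eq_smul_one]

variable {Q} {a : Fin 2 → k} (hQ : ∀ v, Q v = a 0 * v 0 ^ 2 + a 1 * v 1 ^ 2)
include hQ

theorem evenGen_swap {i j : Fin 3} (hij : i < j) : evenGen Q j i = -evenGen Q i j := by
  have hortho : Q.IsOrtho (Pi.single i 1) (Pi.single j 1) := by
    rw [QuadraticMap.isOrtho_def]
    fin_cases i <;> fin_cases j <;> simp_all [add_comm]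
  ext
  exact ι_mul_ι_comm_of_isOrtho hortho.symm

theorem evenCliffordTable_evenGen :
    EvenCliffordTable a (evenGen Q 0 1) (evenGen Q 0 2) (evenGen Q 1 2) := by
  have hQ₀ : Q (Pi.single 0 1) = a 0 := by simp [hQ]
  have hQ₁ : Q (Pi.single 1 1) = a 1 := by simp [hQ]
  have hQ₂ : Q (Pi.single 2 1) = 0 := by simp [hQ]
  have h₀₁₀ := evenGen_mul_evenGen Q 0 1 0
  have h₁₀₂ := evenGen_mul_evenGen Q 1 0 2
  have h₂₀₁ := evenGen_mul_evenGen Q 2 0 1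
  have h₀₁₂ := evenGen_mul_evenGen Q 0 1 2
  have h₂₁₀ := evenGen_mul_evenGen Q 2 1 0
  have h₀₂₀ := evenGen_mul_evenGen Q 0 2 0
  have h₁₂₁ := evenGen_mul_evenGen Q 1 2 1
  have h₀₂₁ := evenGen_mul_evenGen Q 0 2 1
  have h₁₂₀ := evenGen_mul_evenGen Q 1 2 0
  simp (disch := decide) only [evenGen_swap hQ, evenGen_self, hQ₀, hQ₁, hQ₂, mul_neg, neg_mul,
    neg_neg, zero_smul] at h₀₁₀ h₁₀₂ h₂₀₁ h₀₁₂ h₂₁₀ h₀₂₀ h₁₂₁ h₀₂₁ h₁₂₀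
  constructor
  · linear_combination (norm := module) -h₀₁₀
  · linear_combination (norm := module) -h₁₀₂
  · linear_combination (norm := module) -h₂₀₁
  · linear_combination (norm := module) h₀₁₂
  · linear_combination (norm := module) h₂₁₀
  · linear_combination (norm := module) -h₀₂₀
  · linear_combination (norm := module) -h₁₂₁
  · linear_combination (norm := module) -h₀₂₁
  · linear_combination (norm := module) -h₁₂₀

theorem evenι_bilin_eq_tableBilin :
    (even.ι Q).bilin = tableBilin a (evenGen Q 0 1) (evenGen Q 0 2) (evenGen Q 1 2) := by
  ext i j
  fin_cases i <;> fin_cases j <;> simp [evenGen_self, evenGen_swap hQ, hQ]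

end EvenClifford

section Isomorphism

open CliffordAlgebra

variable {a : Fin 2 → k} {Q : QuadraticForm k (Fin 3 → k)}
  (hQ : ∀ v, Q v = a 0 * v 0 ^ 2 + a 1 * v 1 ^ 2) (h2 : (2 : k) ≠ 0) {c : k}
  (hc : c ^ 2 = -(a 0 * a 1)) (hc0 : c ≠ 0)

noncomputable def evenToPath : even Q →ₐ[k] RingQuot (PathRel k) :=
  even.lift Q ((pathRelations_pathGen.evenCliffordTable hc hc0).toEvenHom hQ)

noncomputable def pathToEven : RingQuot (PathRel k) →ₐ[k] even Q :=
  pathLift ((evenCliffordTable_evenGen hQ).pathRelations hc hc0 h2)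

theorem pathToEven_comp_evenToPath :
    (pathToEven hQ h2 hc hc0).comp (evenToPath hQ hc hc0) = AlgHom.id k (even Q) := by
  refine even.algHom_ext Q (EvenHom.ext (LinearMap.ext₂ fun v w ↦ ?_))
  have ht := evenCliffordTable_evenGen hQ
  change pathToEven hQ h2 hc hc0 (evenToPath hQ hc hc0 ((even.ι Q).bilin v w)) = _
  rw [evenToPath, even.lift_ι, EvenCliffordTable.toEvenHom, AlgHom.map_tableBilin]
  simp only [pathToEven, map_sub, map_smul, pathLift_pathGen_zero, pathLift_pathGen_one,
    pathLift_pathGen_two, pathLift_pathGen_three, idem₁_sub_idem₂ h2, smul_inv_smul₀ hc0,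
    ht.idem₂_mul_sub hc hc0 h2, ht.idem₁_mul_sub hc hc0 h2, ← evenι_bilin_eq_tableBilin hQ]
  rfl

theorem evenToPath_comp_pathToEven :
    (evenToPath hQ hc hc0).comp (pathToEven hQ h2 hc hc0) = AlgHom.id k (RingQuot (PathRel k)) := by
  have hP := pathRelations_pathGen (k := k)
  have hu : evenToPath hQ hc hc0 (evenGen Q 0 1) = c • (pathGen k 0 - pathGen k 1) := by
    simp [evenToPath, evenGen, EvenCliffordTable.toEvenHom]
  have hx : evenToPath hQ hc hc0 (evenGen Q 0 2) = pathGen k 2 - (a 0 / c) • pathGen k 3 := by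
    simp [evenToPath, evenGen, EvenCliffordTable.toEvenHom]
  have hy : evenToPath hQ hc hc0 (evenGen Q 1 2) = pathGen k 3 - (a 1 / c) • pathGen k 2 := by
    simp [evenToPath, evenGen, EvenCliffordTable.toEvenHom]
  refine pathAlgHom_ext fun i ↦ ?_
  fin_cases i <;>
    simp [pathToEven, AlgHom.map_idem₁, AlgHom.map_idem₂, hu, hx, hy, inv_smul_smul₀ hc0,
      idem₁_sub_of_add_eq_one h2 hP.e₁_add_e₂, idem₂_sub_of_add_eq_one h2 hP.e₁_add_e₂,
      hP.e₂_mul_sub, hP.e₁_mul_sub]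

noncomputable def evenEquivPath : even Q ≃ₐ[k] RingQuot (PathRel k) :=
  AlgEquiv.ofAlgHom (evenToPath hQ hc hc0) (pathToEven hQ h2 hc hc0)
    (evenToPath_comp_pathToEven hQ h2 hc hc0) (pathToEven_comp_evenToPath hQ h2 hc hc0)

end Isomorphism

end

theorem stmt_4 (k : Type*) [Field k] [IsAlgClosed k] (hchar : (2 : k) ≠ 0)
    (a : Fin 2 → k) (ha : ∀ i, a i ≠ 0)
    (Q : QuadraticForm k (Fin 3 → k))
    (hQ : ∀ x : Fin 3 → k, Q x = a 0 * (x 0) ^ 2 + a 1 * (x 1) ^ 2) :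
    Nonempty ((CliffordAlgebra.even Q) ≃ₐ[k] RingQuot (PathRel k)) := by
  obtain ⟨c, hc⟩ := IsAlgClosed.exists_pow_nat_eq (-(a 0 * a 1)) two_pos
  have hc0 : c ≠ 0 := by
    rintro rfl
    exact mul_ne_zero (ha 0) (ha 1) (by simpa using hc.symm)
  exact ⟨evenEquivPath hQ hchar hc hc0⟩
end
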